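/- Let n ≥ 2, let ψ : ℝ^{n−1} → ℝ ∪ {±∞} be a concave function, and let Λ_ψ = {(y,z) ∈ ℝ^{n−1} × ℝ : z ≤ ψ(y)} be its (closed convex) hypograph. Then for every r > 0, the planar Ehrhard symmetrization commutes with the Gaussian Banaszczyk transform in the vertical direction: E₂(Λ_ψ ∘ (r·e_n)) = E₂(Λ_ψ) ∘ (r·e₂). -/

import Mathlib

open MeasureTheory Set
open scoped Pointwise RealInnerProductSpace ENNReal Classical

/-- The standard Gaussian measure on `ℝ^d`, with density `(2π)^(-d/2) exp(-‖x‖²/2)`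
with respect to Lebesgue measure. -/
noncomputable def gaussD (d : ℕ) : Measure (EuclideanSpace ℝ (Fin d)) :=
  volume.withDensity fun x =>
    ENNReal.ofReal ((2 * Real.pi) ^ (-(d : ℝ) / 2) * Real.exp (-‖x‖ ^ 2 / 2))

/-- The standard Gaussian measure on `ℝ`. -/
noncomputable def gauss1 : Measure ℝ :=
  volume.withDensity fun t =>
    ENNReal.ofReal ((2 * Real.pi) ^ (-(1 : ℝ) / 2) * Real.exp (-t ^ 2 / 2))

/-- The slice `(K - y) ∩ ℝu`, viewed as a subset of `ℝ` via the isometry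
`t ↦ t • (u / ‖u‖)`. -/
def lineSlice {n : ℕ} (K : Set (EuclideanSpace ℝ (Fin n)))
    (u y : EuclideanSpace ℝ (Fin n)) : Set ℝ :=
  {t : ℝ | y + t • (‖u‖⁻¹ • u) ∈ K}

/-- `Z_B(K, u)`: the set of `y ∈ u^⊥` such that `(K - y) ∩ ℝu` has Euclidean length
at least `2‖u‖`. -/
noncomputable def ZB {n : ℕ} (K : Set (EuclideanSpace ℝ (Fin n)))
    (u : EuclideanSpace ℝ (Fin n)) : Set (EuclideanSpace ℝ (Fin n)) :=
  {y | ⟪y, u⟫ = 0 ∧ ENNReal.ofReal (2 * ‖u‖) ≤ volume (lineSlice K u y)}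

/-- Banaszczyk's transform `K * u = (K + [-u, u]) ∩ (Z_B + ℝu)`, with `K * 0 = K`. -/
noncomputable def bTransform {n : ℕ} (K : Set (EuclideanSpace ℝ (Fin n)))
    (u : EuclideanSpace ℝ (Fin n)) : Set (EuclideanSpace ℝ (Fin n)) :=
  if u = 0 then K
  else (K + segment ℝ (-u) u) ∩ (ZB K u + Set.range fun t : ℝ => t • u)

/-- `Z_K(u)`: the set of `y ∈ u^⊥` such that `γ₁((K - y) ∩ ℝu) ≥ γ₁([-‖u‖, ‖u‖])`. -/
noncomputable def ZG {n : ℕ} (K : Set (EuclideanSpace ℝ (Fin n)))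
    (u : EuclideanSpace ℝ (Fin n)) : Set (EuclideanSpace ℝ (Fin n)) :=
  {y | ⟪y, u⟫ = 0 ∧ gauss1 (Set.Icc (-‖u‖) ‖u‖) ≤ gauss1 (lineSlice K u y)}

/-- The Gaussian Banaszczyk transform `K ∘ u = (K + [-u, u]) ∩ (Z_K(u) + ℝu)`,
with `K ∘ 0 = K`. -/
noncomputable def gTransform {n : ℕ} (K : Set (EuclideanSpace ℝ (Fin n)))
    (u : EuclideanSpace ℝ (Fin n)) : Set (EuclideanSpace ℝ (Fin n)) :=
  if u = 0 then K
  else (K + segment ℝ (-u) u) ∩ (ZG K u + Set.range fun t : ℝ => t • u)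

/-- `Φ`, the cumulative distribution function of the standard Gaussian on `ℝ`. -/
noncomputable def Phi (t : ℝ) : ℝ := (gauss1 (Set.Iic t)).toReal

/-- `Φ⁻¹ : [0,1] → ℝ ∪ {±∞}`, the (extended-real-valued) inverse of `Φ`. -/
noncomputable def PhiInv (p : ℝ) : EReal :=
  sSup ((fun t : ℝ => (t : EReal)) '' {t : ℝ | Phi t ≤ p})

/-- Embedding of `ℝ^{n-1} × ℝ` into `ℝ^n`, putting `z` in the last coordinate. -/
noncomputable def embed (n : ℕ) (y : EuclideanSpace ℝ (Fin (n - 1))) (z : ℝ) :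
    EuclideanSpace ℝ (Fin n) :=
  (EuclideanSpace.equiv (Fin n) ℝ).symm
    (fun j => if h : (j : ℕ) < n - 1 then y ⟨(j : ℕ), h⟩ else z)

/-- The planar Ehrhard symmetrization
`E₂(K) = {(x, z) ∈ ℝ² : x ≤ Φ⁻¹(γ_{n-1}(K_z))}`, where `K_z` is the orthogonal
projection of `(K - z eₙ) ∩ eₙ^⊥` onto `eₙ^⊥ ≅ ℝ^{n-1}` (with `eₙ` the last
standard basis vector). -/
noncomputable def ehrhardSymm2 (n : ℕ) (K : Set (EuclideanSpace ℝ (Fin n))) :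
    Set (EuclideanSpace ℝ (Fin 2)) :=
  {p | ((p 0 : ℝ) : EReal) ≤ PhiInv ((gaussD (n - 1) {y | embed n y (p 1) ∈ K}).toReal)}

/-- Projection of `ℝ^n` onto the first `n - 1` coordinates. -/
noncomputable def dropLast (n : ℕ) (x : EuclideanSpace ℝ (Fin n)) :
    EuclideanSpace ℝ (Fin (n - 1)) :=
  (EuclideanSpace.equiv (Fin (n - 1)) ℝ).symm fun j => x ⟨(j : ℕ), by have := j.2; omega⟩

/-- The hypograph `Λ_ψ = {(y, z) : z ≤ ψ(y)} ⊆ ℝ^n` of `ψ : ℝ^{n-1} → ℝ ∪ {±∞}`,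
with the `z`-axis in coordinate direction `e_i`. -/
def hypograph {n : ℕ} (ψ : EuclideanSpace ℝ (Fin (n - 1)) → EReal) (i : Fin n) :
    Set (EuclideanSpace ℝ (Fin n)) :=
  {x | ((x i : ℝ) : EReal) ≤ ψ (dropLast n x)}

/-! If every vertical slice `K_y = {t | (y, t) ∈ K}` of a set `K ⊆ ℝⁿ` is a closed lower half-line
(or `∅`, `ℝ`), then so is every slice of `K ∘ (r eₙ)`: adding `[-r eₙ, r eₙ]` shifts the slices up by
`r`, and since a closed lower set `S ⊆ ℝ` has `γ₁(S) ≥ γ₁([-r, r]) = Φ(c)` iff `c ∈ S`, the cylinder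
`Z_K + ℝ eₙ` keeps exactly the columns whose slice contains `c`. So `K ∘ (r eₙ)` has slices
`{t | max (t - r) c ∈ K_y}`. The planar symmetrization of such a `K` is `{(x, z) | Φ(x) ≤ m(z)}`,
where `m(z) = γ_{n-1}{y | z ∈ K_y}` is antitone and upper semicontinuous (by continuity of measure
from above, as `K` is closed), so it has closed lower slices in `ℝ²` as well, and both sides of the
identity equal `{(x, z) | Φ(x) ≤ m(max (z - r) c)}`. -/

open ProbabilityTheory Filter Topology

namespace ProbabilityTheory

variable {μ : Measure ℝ} [IsProbabilityMeasure μ]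

lemma leftLim_cdf [NullSingletonClass μ] (a : ℝ) : Function.leftLim (cdf μ) a = cdf μ a := by
  have h := (cdf μ).measure_singleton a
  rw [measure_cdf, measure_singleton, eq_comm, ENNReal.ofReal_eq_zero, sub_nonpos] at h
  exact le_antisymm ((cdf μ).mono.leftLim_le le_rfl) h

lemma continuous_cdf [NullSingletonClass μ] : Continuous (cdf μ) :=
  continuous_iff_continuousAt.2 fun a => continuousAt_iff_continuous_left_right.2
    ⟨continuousWithinAt_Iio_iff_Iic.1 <|
      ((cdf μ).mono.continuousWithinAt_Iio_iff_leftLim_eq).2 (leftLim_cdf a),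
     (cdf μ).right_continuous a⟩

lemma strictMono_cdf (hμ : volume ≪ μ) : StrictMono (cdf μ) := by
  intro a b hab
  have hpos : 0 < μ (Ioc a b) :=
    pos_of_ne_zero fun h => absurd (by simpa using hμ h) hab.not_ge
  rw [← measure_cdf (μ := μ), StieltjesFunction.measure_Ioc, ENNReal.ofReal_pos] at hpos
  linarith

end ProbabilityTheory

lemma gauss1_eq_gaussianReal : gauss1 = gaussianReal 0 1 := by
  rw [gaussianReal_of_var_ne_zero _ one_ne_zero, gauss1]
  congr 1
  funext t
  simp only [gaussianPDF, gaussianPDFReal, NNReal.coe_one, mul_one, sub_zero]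
  rw [Real.sqrt_eq_rpow, ← Real.rpow_neg (by positivity)]
  norm_num

instance : IsProbabilityMeasure gauss1 := gauss1_eq_gaussianReal ▸ inferInstance

instance : NullSingletonClass gauss1 :=
  gauss1_eq_gaussianReal ▸ nullSingletonClass_gaussianReal one_ne_zero

lemma Phi_eq_cdf : Phi = cdf gauss1 := by
  funext t
  rw [Phi, cdf_eq_real, measureReal_def]

lemma continuous_Phi : Continuous Phi := Phi_eq_cdf ▸ continuous_cdf

lemma strictMono_Phi : StrictMono Phi :=
  Phi_eq_cdf ▸ strictMono_cdf
    (gauss1_eq_gaussianReal ▸ gaussianReal_absolutelyContinuous' 0 one_ne_zero)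

lemma Phi_nonneg (t : ℝ) : 0 ≤ Phi t := ENNReal.toReal_nonneg

lemma gauss1_Iic (c : ℝ) : gauss1 (Iic c) = ENNReal.ofReal (Phi c) := by
  rw [Phi_eq_cdf, ofReal_cdf]

lemma gauss1_Icc (a b : ℝ) : gauss1 (Icc a b) = ENNReal.ofReal (Phi b - Phi a) := by
  have h := (cdf gauss1).measure_Icc a b
  rwa [measure_cdf, leftLim_cdf, ← Phi_eq_cdf] at h

lemma le_PhiInv_iff {a q : ℝ} : (a : EReal) ≤ PhiInv q ↔ Phi a ≤ q := by
  refine ⟨fun h => ?_, fun h => le_sSup ⟨a, h, rfl⟩⟩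
  by_contra! hq
  obtain ⟨l, hla, hl⟩ := exists_Ioc_subset_of_mem_nhds
    ((continuous_Phi.continuousAt (x := a)).eventually_const_lt hq) ⟨a - 1, by linarith⟩
  have hPhiInv : PhiInv q ≤ l := by
    refine sSup_le ?_
    rintro _ ⟨t, ht, rfl⟩
    by_contra! hlt
    have hmin : min t a ∈ Ioc l a := ⟨lt_min (EReal.coe_lt_coe_iff.1 hlt) hla, min_le_right _ _⟩
    exact (hl hmin).not_ge ((strictMono_Phi.monotone (min_le_left t a)).trans ht)
  exact hla.not_ge (EReal.coe_le_coe_iff.1 (h.trans hPhiInv))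

lemma exists_Phi_eq {q b : ℝ} (hq : 0 < q) (hqb : q ≤ Phi b) : ∃ c, Phi c = q := by
  have hbot : Tendsto Phi atBot (𝓝 0) := Phi_eq_cdf ▸ tendsto_cdf_atBot gauss1
  obtain ⟨a, ha⟩ := (hbot.eventually_lt_const hq).exists
  exact mem_range_of_exists_le_of_exists_ge continuous_Phi ⟨a, ha.le⟩ ⟨b, hqb⟩

lemma ofReal_Phi_le_gauss1_iff {S : Set ℝ} (hS : IsClosed S) (hlow : IsLowerSet S) (c : ℝ) :
    ENNReal.ofReal (Phi c) ≤ gauss1 S ↔ c ∈ S := by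
  refine ⟨fun h => ?_, fun hc => gauss1_Iic c ▸ measure_mono fun t ht => hlow ht hc⟩
  by_contra hc
  obtain ⟨l, hlc, hl⟩ := exists_Ioc_subset_of_mem_nhds (hS.isOpen_compl.mem_nhds hc)
    ⟨c - 1, by linarith⟩
  have hsub : S ⊆ Iic l := fun t ht => by
    by_contra! hlt
    exact hl ⟨not_le.1 hlt, le_of_not_ge fun hct => hc (hlow hct ht)⟩ ht
  have := h.trans (measure_mono hsub)
  rw [gauss1_Iic, ENNReal.ofReal_le_ofReal_iff (Phi_nonneg l)] at this
  exact (strictMono_Phi hlc).not_ge this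

section VerticalSlices

variable {n : ℕ} (h : n - 1 < n)

def ofVerticalSlices (S : EuclideanSpace ℝ (Fin (n - 1)) → Set ℝ) :
    Set (EuclideanSpace ℝ (Fin n)) :=
  {x | x ⟨n - 1, h⟩ ∈ S (dropLast n x)}

@[simp]
lemma dropLast_embed (y : EuclideanSpace ℝ (Fin (n - 1))) (z : ℝ) :
    dropLast n (embed n y z) = y := by
  ext j
  simp [dropLast, embed]

@[simp]
lemma embed_apply_last (y : EuclideanSpace ℝ (Fin (n - 1))) (z : ℝ) :
    embed n y z ⟨n - 1, h⟩ = z := by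
  simp [embed]

@[simp]
lemma dropLast_add_smul_single (x : EuclideanSpace ℝ (Fin n)) (t : ℝ) :
    dropLast n (x + t • EuclideanSpace.single (⟨n - 1, h⟩ : Fin n) (1 : ℝ)) = dropLast n x := by
  ext j
  have hj : (j : ℕ) ≠ n - 1 := by omega
  simp [dropLast, hj]

lemma continuous_embed :
    Continuous fun p : EuclideanSpace ℝ (Fin (n - 1)) × ℝ => embed n p.1 p.2 := by
  refine (EuclideanSpace.equiv (Fin n) ℝ).symm.continuous.comp (continuous_pi fun j => ?_)
  by_cases hj : (j : ℕ) < n - 1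
  · simp only [hj, dite_true]
    fun_prop
  · simp only [hj, dite_false]
    fun_prop

variable {h}

@[simp]
lemma embed_mem_ofVerticalSlices {S : EuclideanSpace ℝ (Fin (n - 1)) → Set ℝ}
    (y : EuclideanSpace ℝ (Fin (n - 1))) (z : ℝ) :
    embed n y z ∈ ofVerticalSlices h S ↔ z ∈ S y := by
  simp [ofVerticalSlices]

end VerticalSlices

lemma IsLowerSet.max_mem_iff {α : Type*} [LinearOrder α] {s : Set α} (hs : IsLowerSet s)
    {a b : α} : max a b ∈ s ↔ a ∈ s ∧ b ∈ s :=
  ⟨fun hab => ⟨hs (le_max_left a b) hab, hs (le_max_right a b) hab⟩,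
    fun ⟨ha, hb⟩ => by rcases max_choice a b with hm | hm <;> rw [hm] <;> assumption⟩

section GaussianTransform

variable {n : ℕ} {h : n - 1 < n} {S : EuclideanSpace ℝ (Fin (n - 1)) → Set ℝ} {r : ℝ}

lemma ofVerticalSlices_add_segment (hlow : ∀ y, IsLowerSet (S y)) (hr : 0 ≤ r) :
    ofVerticalSlices h S + segment ℝ (-(r • EuclideanSpace.single (⟨n - 1, h⟩ : Fin n) (1 : ℝ)))
        (r • EuclideanSpace.single (⟨n - 1, h⟩ : Fin n) (1 : ℝ))
      = ofVerticalSlices h fun y => {t | t - r ∈ S y} := by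
  set e := EuclideanSpace.single (⟨n - 1, h⟩ : Fin n) (1 : ℝ)
  have hseg : segment ℝ (-(r • e)) (r • e) = (· • e) '' Icc (-r) r := by
    rw [← segment_eq_Icc (neg_le_self hr), ← neg_smul]
    exact (image_segment ℝ (LinearMap.toSpanSingleton ℝ _ e).toAffineMap _ _).symm
  ext x
  simp only [hseg, Set.mem_add, mem_image, ofVerticalSlices, mem_ofPred_eq]
  constructor
  · rintro ⟨k, hk, _, ⟨s, hs, rfl⟩, rfl⟩
    refine hlow _ ?_ (by simpa [e] using hk)
    simp [e]
    linarith [hs.2]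
  · intro hx
    refine ⟨x + (-r) • e, ?_, r • e, ⟨r, ⟨by linarith, le_rfl⟩, rfl⟩, by simp⟩
    rw [dropLast_add_smul_single]
    simpa [e, sub_eq_add_neg] using hx

lemma lineSlice_ofVerticalSlices (hr : 0 < r) (y : EuclideanSpace ℝ (Fin n)) :
    lineSlice (ofVerticalSlices h S) (r • EuclideanSpace.single (⟨n - 1, h⟩ : Fin n) (1 : ℝ)) y
      = {t | y ⟨n - 1, h⟩ + t ∈ S (dropLast n y)} := by
  have hunit : ‖r • EuclideanSpace.single (⟨n - 1, h⟩ : Fin n) (1 : ℝ)‖⁻¹ •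
      r • EuclideanSpace.single (⟨n - 1, h⟩ : Fin n) (1 : ℝ)
        = EuclideanSpace.single (⟨n - 1, h⟩ : Fin n) (1 : ℝ) := by
    rw [norm_smul, PiLp.norm_single, norm_one, mul_one, Real.norm_of_nonneg hr.le,
      inv_smul_smul₀ hr.ne']
  ext t
  simp [lineSlice, ofVerticalSlices, hunit]

lemma ZG_ofVerticalSlices (hr : 0 < r) :
    ZG (ofVerticalSlices h S) (r • EuclideanSpace.single (⟨n - 1, h⟩ : Fin n) (1 : ℝ))
      = {y | y ⟨n - 1, h⟩ = 0 ∧ gauss1 (Icc (-r) r) ≤ gauss1 (S (dropLast n y))} := by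
  ext y
  simp only [ZG, mem_ofPred_eq, lineSlice_ofVerticalSlices hr, norm_smul, Real.norm_of_nonneg hr.le,
    PiLp.norm_single, norm_one, mul_one, real_inner_smul_right, EuclideanSpace.inner_single_right,
    conj_trivial, one_mul, mul_eq_zero, hr.ne', false_or]
  refine and_congr_right fun hy => ?_
  simp [hy]

lemma setOf_add_range_smul_single (hr : r ≠ 0) (P : EuclideanSpace ℝ (Fin (n - 1)) → Prop) :
    {y : EuclideanSpace ℝ (Fin n) | y ⟨n - 1, h⟩ = 0 ∧ P (dropLast n y)}
        + range (fun t : ℝ => t • r • EuclideanSpace.single (⟨n - 1, h⟩ : Fin n) (1 : ℝ))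
      = {x | P (dropLast n x)} := by
  ext x
  simp only [Set.mem_add, mem_ofPred_eq, mem_range]
  constructor
  · rintro ⟨y, ⟨-, hy⟩, _, ⟨t, rfl⟩, rfl⟩
    simpa [smul_smul] using hy
  · intro hx
    refine ⟨x + (-x ⟨n - 1, h⟩) • EuclideanSpace.single (⟨n - 1, h⟩ : Fin n) (1 : ℝ),
      ⟨by simp, by rwa [dropLast_add_smul_single]⟩, _, ⟨x ⟨n - 1, h⟩ / r, rfl⟩, ?_⟩
    simp only [smul_smul, div_mul_cancel₀ _ hr, neg_smul, neg_add_cancel_right]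

theorem gTransform_ofVerticalSlices (hS : ∀ y, IsClosed (S y)) (hlow : ∀ y, IsLowerSet (S y))
    (hr : 0 < r) {c : ℝ} (hc : Phi c = Phi r - Phi (-r)) :
    gTransform (ofVerticalSlices h S) (r • EuclideanSpace.single (⟨n - 1, h⟩ : Fin n) (1 : ℝ))
      = ofVerticalSlices h fun y => {t | max (t - r) c ∈ S y} := by
  have hZ : ZG (ofVerticalSlices h S) (r • EuclideanSpace.single (⟨n - 1, h⟩ : Fin n) (1 : ℝ))
      + range (fun t : ℝ => t • r • EuclideanSpace.single (⟨n - 1, h⟩ : Fin n) (1 : ℝ))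
        = {x | c ∈ S (dropLast n x)} := by
    simp_rw [ZG_ofVerticalSlices hr, gauss1_Icc, ← hc, ofReal_Phi_le_gauss1_iff (hS _) (hlow _)]
    exact setOf_add_range_smul_single hr.ne' fun y => c ∈ S y
  have hne : r • EuclideanSpace.single (⟨n - 1, h⟩ : Fin n) (1 : ℝ) ≠ 0 :=
    smul_ne_zero hr.ne' (by simp)
  rw [gTransform, if_neg hne, ofVerticalSlices_add_segment hlow hr.le, hZ]
  ext x
  simp only [ofVerticalSlices, mem_inter_iff, mem_ofPred_eq, (hlow _).max_mem_iff]

end GaussianTransform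

lemma integrable_exp_neg_sq_norm_div_two (d : ℕ) :
    Integrable fun x : EuclideanSpace ℝ (Fin d) => Real.exp (-‖x‖ ^ 2 / 2) := by
  refine (GaussianFourier.integrable_cexp_neg_mul_sq_norm_add (V := EuclideanSpace ℝ (Fin d))
    (b := 1 / 2) (by norm_num) 0 0).norm.congr (ae_of_all _ fun x => ?_)
  simp [Complex.norm_exp, ← Complex.ofReal_pow]
  ring

instance (d : ℕ) : IsFiniteMeasure (gaussD d) :=
  isFiniteMeasure_withDensity_ofReal
    ((integrable_exp_neg_sq_norm_div_two d).const_mul _).hasFiniteIntegral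

section SectionMass

variable {d : ℕ} {S : EuclideanSpace ℝ (Fin d) → Set ℝ}

noncomputable def sectionMass (S : EuclideanSpace ℝ (Fin d) → Set ℝ) (t : ℝ) : ℝ :=
  (gaussD d {y | t ∈ S y}).toReal

lemma antitone_sectionMass (hlow : ∀ y, IsLowerSet (S y)) : Antitone (sectionMass S) :=
  fun _ _ hst => ENNReal.toReal_mono (measure_ne_top _ _) (measure_mono fun y hy => hlow y hst hy)

lemma isClosed_setOf_le_sectionMass (hS : ∀ y, IsClosed (S y)) (hlow : ∀ y, IsLowerSet (S y))
    (hmeas : ∀ t, MeasurableSet {y | t ∈ S y}) (a : ℝ) :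
    IsClosed {t | a ≤ sectionMass S t} := by
  refine isClosed_of_closure_subset fun t ht => ?_
  have hleft : ∀ s < t, ENNReal.ofReal a ≤ gaussD d {y | s ∈ S y} := fun s hs => by
    obtain ⟨u, hsu, hu⟩ := mem_closure_iff_nhds.1 ht (Ioi s) (Ioi_mem_nhds hs)
    exact (ENNReal.ofReal_le_iff_le_toReal (measure_ne_top _ _)).2
      (hu.trans (antitone_sectionMass hlow (le_of_lt hsu)))
  obtain ⟨u, hu_mono, hu_lt, hu_tend⟩ := exists_seq_strictMono_tendsto' (sub_one_lt t)
  have hanti : Antitone fun k => {y | u k ∈ S y} :=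
    fun k l hkl y hy => hlow y (hu_mono.monotone hkl) hy
  have hInter : ⋂ k, {y | u k ∈ S y} = {y | t ∈ S y} := by
    ext y
    simp only [mem_iInter, mem_ofPred_eq]
    exact ⟨fun hy => (hS y).mem_of_tendsto hu_tend (Eventually.of_forall hy),
      fun hy k => hlow y (hu_lt k).2.le hy⟩
  have hcont := hanti.measure_iInter (fun k => (hmeas _).nullMeasurableSet)
    ⟨0, measure_ne_top (gaussD d) _⟩
  rw [hInter] at hcont
  change a ≤ (gaussD d {y | t ∈ S y}).toReal
  rw [← ENNReal.ofReal_le_iff_le_toReal (measure_ne_top _ _), hcont]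
  exact le_iInf fun k => hleft _ (hu_lt k).2

end SectionMass

lemma hypograph_eq_ofVerticalSlices {n : ℕ} (h : n - 1 < n)
    (ψ : EuclideanSpace ℝ (Fin (n - 1)) → EReal) :
    hypograph ψ ⟨n - 1, h⟩ = ofVerticalSlices h fun y => {t : ℝ | (t : EReal) ≤ ψ y} :=
  rfl

lemma ehrhardSymm2_ofVerticalSlices {n : ℕ} (h : n - 1 < n)
    (S : EuclideanSpace ℝ (Fin (n - 1)) → Set ℝ) :
    ehrhardSymm2 n (ofVerticalSlices h S) = {p | Phi (p 0) ≤ sectionMass S (p 1)} := by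
  ext p
  simp only [ehrhardSymm2, mem_ofPred_eq, le_PhiInv_iff, embed_mem_ofVerticalSlices]
  rfl

theorem ehrhardSymm2_gTransform_ofVerticalSlices_comm {n : ℕ} (h : n - 1 < n)
    {S : EuclideanSpace ℝ (Fin (n - 1)) → Set ℝ} (hS : IsClosed (ofVerticalSlices h S))
    (hlow : ∀ y, IsLowerSet (S y)) {r : ℝ} (hr : 0 < r) :
    ehrhardSymm2 n (gTransform (ofVerticalSlices h S)
        (r • EuclideanSpace.single (⟨n - 1, h⟩ : Fin n) (1 : ℝ)))
      = gTransform (ehrhardSymm2 n (ofVerticalSlices h S))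
          (r • EuclideanSpace.single (1 : Fin 2) (1 : ℝ)) := by
  have hslice (y) : IsClosed (S y) := by
    convert hS.preimage (continuous_embed.comp (Continuous.prodMk_right y)) using 1
    ext; simp
  have hsection (t) : IsClosed {y | t ∈ S y} := by
    convert hS.preimage (continuous_embed.comp (Continuous.prodMk_left t)) using 1
    ext; simp
  obtain ⟨c, hc⟩ := exists_Phi_eq (b := r) (sub_pos.2 (strictMono_Phi (neg_lt_self hr)))
    (sub_le_self _ (Phi_nonneg (-r)))
  set T : EuclideanSpace ℝ (Fin (2 - 1)) → Set ℝ :=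
    fun v => {t | Phi (v ⟨0, by norm_num⟩) ≤ sectionMass S t}
  have hplanar : {p : EuclideanSpace ℝ (Fin 2) | Phi (p 0) ≤ sectionMass S (p 1)}
      = ofVerticalSlices (by norm_num) T :=
    rfl
  rw [gTransform_ofVerticalSlices hslice hlow hr hc, ehrhardSymm2_ofVerticalSlices,
    ehrhardSymm2_ofVerticalSlices, hplanar]
  exact (gTransform_ofVerticalSlices (S := T)
    (fun _ => isClosed_setOf_le_sectionMass hslice hlow (fun t => (hsection t).measurableSet) _)
    (fun _ _ _ hst hs => hs.trans (antitone_sectionMass hlow hst)) hr hc).symm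

/-- **Claim 2.** For a concave `ψ : ℝ^{n-1} → ℝ ∪ {±∞}` with (closed convex) hypograph
`Λ_ψ`, the planar Ehrhard symmetrization commutes with the Gaussian Banaszczyk
transform in the vertical direction: `E₂(Λ_ψ ∘ (r eₙ)) = E₂(Λ_ψ) ∘ (r e₂)`. -/
theorem ehrhardSymm2_gTransform_comm (n : ℕ) (hn : 2 ≤ n)
    (ψ : EuclideanSpace ℝ (Fin (n - 1)) → EReal)
    (hcl : IsClosed (hypograph ψ (⟨n - 1, by omega⟩ : Fin n)))
    (r : ℝ) (hr : 0 < r) :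
    ehrhardSymm2 n (gTransform (hypograph ψ (⟨n - 1, by omega⟩ : Fin n))
        (r • EuclideanSpace.single (⟨n - 1, by omega⟩ : Fin n) 1))
      = gTransform (ehrhardSymm2 n (hypograph ψ (⟨n - 1, by omega⟩ : Fin n)))
          (r • EuclideanSpace.single (1 : Fin 2) 1) := by
  rw [hypograph_eq_ofVerticalSlices] at hcl ⊢
  exact ehrhardSymm2_gTransform_ofVerticalSlices_comm _ hcl
    (fun _ _ _ hst ht => (EReal.coe_le_coe_iff.2 hst).trans ht) hr
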